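/- arXiv:1208.5325 — 3 statements merged into one kernel-verified Lean document; each statement's English description precedes it below -/
import Mathlib

section
/- For every k ≥ 1, among all perfect pairings (partitions into pairs) of the 2k points 1, 2, ..., 2k arranged in convex position (e.g., on a circle), the number of pairings with an even number of crossing pairs exceeds the number of pairings with an odd number of crossing pairs by exactly 1. Here two pairs {a,b} and {c,d} with a<b, c<d cross if a<c<b<d or c<a<d<b. -/
open scoped Classical

/-- A pairing of `Fin (2*k)`: a partition of all points into two-element sets. -/
def IsPairing (k : ℕ) (M : Finset (Finset (Fin (2*k)))) : Prop :=
  (∀ p ∈ M, p.card = 2) ∧ ∀ v : Fin (2*k), ∃! p, p ∈ M ∧ v ∈ p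

/-- Two pairs `{a,b}`, `{c,d}` (with `a<b`, `c<d`) cross, recorded in the
normalized order `a < c` (so that each crossing unordered pair of pairs is
counted exactly once among ordered pairs). -/
def CrossOrd {k : ℕ} (p q : Finset (Fin (2*k))) : Prop :=
  ∃ a b c d : Fin (2*k), a < b ∧ c < d ∧ p = {a, b} ∧ q = {c, d} ∧
    a < c ∧ c < b ∧ b < d

/-- The number of (unordered) crossing pairs of pairs in a pairing `M`. -/
noncomputable def crossNum {k : ℕ} (M : Finset (Finset (Fin (2*k)))) : ℕ :=
  ((M ×ˢ M).filter (fun pq => CrossOrd pq.1 pq.2)).card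

/-!
Call `{{0,1}, {2,3}, …}` the adjacent pairing; it has no crossings. For any other pairing `M`
take the first block `{2i, 2i+1}` that is not a pair of `M` and move `M` by the transposition
`(2i 2i+1)`. The transposition maps every block to itself, so the first defective block does not
change and this is an involution on the non-adjacent pairings. Since `2i` and `2i+1` are
neighbours, the transposition preserves the order of any two points other than these two, hence
every crossing except between the pairs through `2i` and `2i+1`; of the two ways of joining these
four points exactly one crosses, so the involution changes the parity of the crossing number.
-/

open scoped Pointwise

section Crossing
variable {k : ℕ}

lemma pair_eq_pair_of_lt {a b u v : Fin (2*k)} (hab : a < b) (huv : u < v)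
    (h : ({a, b} : Finset (Fin (2*k))) = {u, v}) : a = u ∧ b = v := by
  have ha : a ∈ ({u, v} : Finset (Fin (2*k))) := h ▸ by simp
  have hb : b ∈ ({u, v} : Finset (Fin (2*k))) := h ▸ by simp
  have hu : u ∈ ({a, b} : Finset (Fin (2*k))) := h ▸ by simp
  simp only [Finset.mem_insert, Finset.mem_singleton] at ha hb hu
  rcases ha with rfl | rfl <;> rcases hb with rfl | rfl <;> simp_all [lt_asymm]

lemma crossOrd_pair_iff_of_lt {u v s t : Fin (2*k)} (huv : u < v) (hst : s < t) :
    CrossOrd ({u, v} : Finset (Fin (2*k))) {s, t} ↔ u < s ∧ s < v ∧ v < t := by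
  constructor
  · rintro ⟨a, b, c, d, hab, hcd, hp, hq, h⟩
    obtain ⟨rfl, rfl⟩ := pair_eq_pair_of_lt hab huv hp.symm
    obtain ⟨rfl, rfl⟩ := pair_eq_pair_of_lt hcd hst hq.symm
    exact h
  · rintro h
    exact ⟨u, v, s, t, huv, hst, rfl, rfl, h⟩

lemma crossOrd_pair_iff {u v s t : Fin (2*k)} (huv : u ≠ v) (hst : s ≠ t) :
    CrossOrd ({u, v} : Finset (Fin (2*k))) {s, t} ↔
      min u v < min s t ∧ min s t < max u v ∧ max u v < max s t := by
  have pair_eq_min_max :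
      ∀ {a b : Fin (2*k)}, ({a, b} : Finset (Fin (2*k))) = {min a b, max a b} := by
    intro a b
    rcases le_total a b with h | h
    · simp [h]
    · simp [h, Finset.pair_comm]
  rw [pair_eq_min_max, @pair_eq_min_max s t]
  exact crossOrd_pair_iff_of_lt (min_lt_max.2 huv) (min_lt_max.2 hst)

lemma sum_crossOrd_indicators_eq_one_of_val_succ {x y a b : Fin (2*k)}
    (hxy : y.val = x.val + 1) (hax : a ≠ x) (hay : a ≠ y) (hbx : b ≠ x) (hby : b ≠ y)
    (hab : a ≠ b) :
    ((if CrossOrd ({x, a} : Finset (Fin (2*k))) {y, b} then 1 else 0 : ZMod 2) +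
      if CrossOrd ({y, a} : Finset (Fin (2*k))) {x, b} then 1 else 0) +
    ((if CrossOrd ({y, b} : Finset (Fin (2*k))) {x, a} then 1 else 0) +
      if CrossOrd ({x, b} : Finset (Fin (2*k))) {y, a} then 1 else 0) = 1 := by
  rw [crossOrd_pair_iff hax.symm hby.symm, crossOrd_pair_iff hby.symm hax.symm,
    crossOrd_pair_iff hay.symm hbx.symm, crossOrd_pair_iff hbx.symm hay.symm]
  simp only [Fin.lt_def, Fin.coe_min, Fin.coe_max, ← Fin.val_ne_iff] at *
  split_ifs <;> first | decide | omega

lemma strictMonoOn_swap_of_val_succ {n : ℕ} {x y : Fin n} (hxy : y.val = x.val + 1)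
    {S : Set (Fin n)} (hS : ¬ (x ∈ S ∧ y ∈ S)) : StrictMonoOn (Equiv.swap x y) S := by
  intro u hu v hv huv
  have hu' : u = x → v ≠ y := fun hux hvy => hS ⟨hux ▸ hu, hvy ▸ hv⟩
  have hv' : u = y → v ≠ x := fun huy hvx => hS ⟨hvx ▸ hv, huy ▸ hu⟩
  rw [Equiv.swap_apply_def, Equiv.swap_apply_def]
  split_ifs <;> simp only [Fin.lt_def, Fin.ext_iff] at * <;> omega

lemma mem_swap_smul_finset_iff {α : Type*} [DecidableEq α] {x y z : α} {s : Finset α} :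
    z ∈ Equiv.swap x y • s ↔ Equiv.swap x y z ∈ s := by
  rw [← Finset.inv_smul_mem_iff, Equiv.swap_inv, Equiv.Perm.smul_def]

variable {x y : Fin (2*k)}

lemma CrossOrd.swap_smul (hxy : y.val = x.val + 1) {p q : Finset (Fin (2*k))}
    (hpq : ¬ (x ∈ p ∪ q ∧ y ∈ p ∪ q)) (h : CrossOrd p q) :
    CrossOrd (Equiv.swap x y • p) (Equiv.swap x y • q) := by
  obtain ⟨a, b, c, d, hab, hcd, rfl, rfl, hac, hcb, hbd⟩ := h
  have hmono := strictMonoOn_swap_of_val_succ hxy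
    (S := ↑({a, b} ∪ {c, d} : Finset (Fin (2*k)))) (by simpa only [Finset.mem_coe] using hpq)
  refine ⟨_, _, _, _, hmono (by simp) (by simp) hab, hmono (by simp) (by simp) hcd, ?_, ?_,
    hmono (by simp) (by simp) hac, hmono (by simp) (by simp) hcb,
    hmono (by simp) (by simp) hbd⟩ <;>
  simp only [Finset.smul_finset_insert, Finset.smul_finset_singleton, Equiv.Perm.smul_def]

lemma crossOrd_swap_smul_iff (hxy : y.val = x.val + 1) {p q : Finset (Fin (2*k))}
    (hpq : ¬ (x ∈ p ∪ q ∧ y ∈ p ∪ q)) :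
    CrossOrd (Equiv.swap x y • p) (Equiv.swap x y • q) ↔ CrossOrd p q := by
  refine ⟨fun h => ?_, CrossOrd.swap_smul hxy hpq⟩
  have hpq' : ¬ (x ∈ Equiv.swap x y • p ∪ Equiv.swap x y • q ∧
      y ∈ Equiv.swap x y • p ∪ Equiv.swap x y • q) := by
    simpa only [← Finset.smul_finset_union, mem_swap_smul_finset_iff, Equiv.swap_apply_left,
      Equiv.swap_apply_right, and_comm] using hpq
  simpa only [Equiv.swap_smul_self_smul] using CrossOrd.swap_smul hxy hpq' h

lemma crossNum_smul (σ : Equiv.Perm (Fin (2*k))) (M : Finset (Finset (Fin (2*k)))) :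
    crossNum (σ • M) =
      ((M ×ˢ M).filter (fun pq => CrossOrd (σ • pq.1) (σ • pq.2))).card := by
  rw [crossNum, Finset.smul_finset_def, ← Finset.prodMap_image_product, Finset.filter_image,
    Finset.card_image_of_injective _ ((MulAction.injective σ).prodMap (MulAction.injective σ))]
  rfl

end Crossing

section Pairing
variable {k : ℕ} {M : Finset (Finset (Fin (2*k)))}

lemma IsPairing.eq_of_mem (hM : IsPairing k M) {p q : Finset (Fin (2*k))} {v : Fin (2*k)}
    (hp : p ∈ M) (hq : q ∈ M) (hvp : v ∈ p) (hvq : v ∈ q) : p = q :=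
  (hM.2 v).unique ⟨hp, hvp⟩ ⟨hq, hvq⟩

lemma IsPairing.exists_pair_mem (hM : IsPairing k M) (v : Fin (2*k)) :
    ∃ w, w ≠ v ∧ {v, w} ∈ M := by
  obtain ⟨p, ⟨hp, hvp⟩, -⟩ := hM.2 v
  obtain ⟨a, b, hab, rfl⟩ := Finset.card_eq_two.mp (hM.1 p hp)
  simp only [Finset.mem_insert, Finset.mem_singleton] at hvp
  rcases hvp with rfl | rfl
  · exact ⟨b, hab.symm, hp⟩
  · exact ⟨a, hab, Finset.pair_comm a v ▸ hp⟩

lemma IsPairing.smul (hM : IsPairing k M) (σ : Equiv.Perm (Fin (2*k))) :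
    IsPairing k (σ • M) := by
  refine ⟨fun p hp => ?_, fun v => ?_⟩
  · obtain ⟨p, hpM, rfl⟩ := Finset.mem_smul_finset.1 hp
    rw [Finset.card_smul_finset, hM.1 p hpM]
  · obtain ⟨p, ⟨hp, hvp⟩, -⟩ := hM.2 (σ⁻¹ • v)
    refine ⟨σ • p, ⟨Finset.smul_mem_smul_finset hp, Finset.inv_smul_mem_iff.1 hvp⟩, ?_⟩
    rintro q ⟨hq, hvq⟩
    rw [← inv_smul_eq_iff]
    exact hM.eq_of_mem (Finset.inv_smul_mem_iff.2 hq) hp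
      (Finset.smul_mem_smul_finset hvq) hvp

variable {x y : Fin (2*k)}

lemma IsPairing.odd_crossNum_add_crossNum_swap_smul (hM : IsPairing k M) (hxy : y.val = x.val + 1)
    (hxyM : {x, y} ∉ M) : Odd (crossNum M + crossNum (Equiv.swap x y • M)) := by
  obtain ⟨a, hax, hP⟩ := hM.exists_pair_mem x
  obtain ⟨b, hby, hQ⟩ := hM.exists_pair_mem y
  have hay : a ≠ y := by rintro rfl; exact hxyM hP
  have hbx : b ≠ x := by rintro rfl; exact hxyM (Finset.pair_comm y b ▸ hQ)
  have hne : ({x, a} : Finset (Fin (2*k))) ≠ {y, b} := by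
    intro h
    have : x ∈ ({y, b} : Finset (Fin (2*k))) := h ▸ by simp
    simp only [Finset.mem_insert, Finset.mem_singleton] at this
    rcases this with h' | h'
    · simp [h'] at hxy
    · exact hbx h'.symm
  have hab : a ≠ b := by
    rintro rfl; exact hne (hM.eq_of_mem (v := a) hP hQ (by simp) (by simp))
  have hsep : ∀ pq ∈ M ×ˢ M, pq ≠ ({x, a}, {y, b}) ∧ pq ≠ ({y, b}, {x, a}) →
      ¬ (x ∈ pq.1 ∪ pq.2 ∧ y ∈ pq.1 ∪ pq.2) := by
    rintro ⟨p, q⟩ hpq ⟨h1, h2⟩ ⟨hx, hy⟩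
    rw [Finset.mem_product] at hpq
    have eqP : ∀ {r}, r ∈ M → x ∈ r → r = {x, a} :=
      fun hr hxr => hM.eq_of_mem hr hP hxr (by simp)
    have eqQ : ∀ {r}, r ∈ M → y ∈ r → r = {y, b} :=
      fun hr hyr => hM.eq_of_mem hr hQ hyr (by simp)
    rw [Finset.mem_union] at hx hy
    rcases hx with hx | hx <;> rcases hy with hy | hy
    · exact hne ((eqP hpq.1 hx).symm.trans (eqQ hpq.1 hy))
    · exact h1 (Prod.ext (eqP hpq.1 hx) (eqQ hpq.2 hy))
    · exact h2 (Prod.ext (eqQ hpq.1 hy) (eqP hpq.2 hx))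
    · exact hne ((eqP hpq.2 hx).symm.trans (eqQ hpq.2 hy))
  have hPQ : ({x, a}, {y, b}) ∈ M ×ˢ M := Finset.mem_product.2 ⟨hP, hQ⟩
  have hQP : ({y, b}, {x, a}) ∈ M ×ˢ M := Finset.mem_product.2 ⟨hQ, hP⟩
  rw [← ZMod.natCast_eq_one_iff_odd, Nat.cast_add, crossNum, crossNum_smul,
    Finset.natCast_card_filter, Finset.natCast_card_filter, ← Finset.sum_add_distrib,
    Finset.sum_eq_add _ _ (by simp [hne]) (fun pq hpq hpq' => ?_) (absurd hPQ) (absurd hQP)]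
  · simp only [Finset.smul_finset_insert, Finset.smul_finset_singleton, Equiv.Perm.smul_def,
      Equiv.swap_apply_left, Equiv.swap_apply_right, Equiv.swap_apply_of_ne_of_ne hax hay,
      Equiv.swap_apply_of_ne_of_ne hbx hby]
    exact sum_crossOrd_indicators_eq_one_of_val_succ hxy hax hay hbx hby hab
  · rw [crossOrd_swap_smul_iff hxy (hsep pq hpq hpq')]
    exact CharTwo.add_self_eq_zero _

end Pairing

section Adjacent
variable {k : ℕ}

def blockLeft (i : Fin k) : Fin (2*k) := ⟨2 * i, by omega⟩

def blockRight (i : Fin k) : Fin (2*k) := ⟨2 * i + 1, by omega⟩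

def blockPair (i : Fin k) : Finset (Fin (2*k)) := {blockLeft i, blockRight i}

lemma mem_blockPair {i : Fin k} {v : Fin (2*k)} : v ∈ blockPair i ↔ v.val / 2 = i.val := by
  simp only [blockPair, blockLeft, blockRight, Finset.mem_insert, Finset.mem_singleton,
    Fin.ext_iff]
  omega

def adjacentPairing (k : ℕ) : Finset (Finset (Fin (2*k))) := Finset.univ.image blockPair

lemma isPairing_adjacentPairing : IsPairing k (adjacentPairing k) := by
  refine ⟨fun p hp => ?_, fun v => ⟨blockPair ⟨v.val / 2, by omega⟩, ⟨?_, ?_⟩, ?_⟩⟩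
  · obtain ⟨i, -, rfl⟩ := Finset.mem_image.1 hp
    exact Finset.card_pair (by simp [blockLeft, blockRight, Fin.ext_iff])
  · exact Finset.mem_image_of_mem _ (Finset.mem_univ _)
  · exact mem_blockPair.2 rfl
  · rintro q ⟨hq, hvq⟩
    obtain ⟨j, -, rfl⟩ := Finset.mem_image.1 hq
    rw [mem_blockPair] at hvq
    congr
    exact Fin.ext hvq.symm

lemma div_two_eq_of_mem_adjacentPairing {p : Finset (Fin (2*k))} (hp : p ∈ adjacentPairing k)
    {u v : Fin (2*k)} (hu : u ∈ p) (hv : v ∈ p) : u.val / 2 = v.val / 2 := by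
  obtain ⟨i, -, rfl⟩ := Finset.mem_image.1 hp
  rw [mem_blockPair.1 hu, mem_blockPair.1 hv]

lemma crossNum_adjacentPairing : crossNum (adjacentPairing k) = 0 := by
  rw [crossNum, Finset.card_eq_zero, Finset.filter_eq_empty_iff]
  rintro ⟨p, q⟩ hpq ⟨a, b, c, d, -, -, rfl, rfl, hac, hcb, hbd⟩
  obtain ⟨hp, hq⟩ := Finset.mem_product.1 hpq
  have hab := div_two_eq_of_mem_adjacentPairing hp (Finset.mem_insert_self a {b})
    (Finset.mem_insert_of_mem (Finset.mem_singleton_self b))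
  have hcd := div_two_eq_of_mem_adjacentPairing hq (Finset.mem_insert_self c {d})
    (Finset.mem_insert_of_mem (Finset.mem_singleton_self d))
  rw [Fin.lt_def] at hac hcb hbd
  omega

variable {M : Finset (Finset (Fin (2*k)))}

lemma IsPairing.eq_adjacentPairing (hM : IsPairing k M) (h : ∀ i, blockPair i ∈ M) :
    M = adjacentPairing k := by
  ext p
  refine ⟨fun hp => ?_, fun hp => ?_⟩
  · obtain ⟨v, hv⟩ := Finset.card_pos.1 (by rw [hM.1 p hp]; norm_num)
    have hvb : v ∈ blockPair ⟨v.val / 2, by omega⟩ := mem_blockPair.2 rfl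
    rw [hM.eq_of_mem hp (h _) hv hvb]
    exact Finset.mem_image_of_mem _ (Finset.mem_univ _)
  · obtain ⟨i, -, rfl⟩ := Finset.mem_image.1 hp
    exact h i

def defects (M : Finset (Finset (Fin (2*k)))) : Finset (Fin k) :=
  Finset.univ.filter (fun i => blockPair i ∉ M)

lemma IsPairing.defects_nonempty (hM : IsPairing k M) (hne : M ≠ adjacentPairing k) :
    (defects M).Nonempty := by
  by_contra h
  refine hne (hM.eq_adjacentPairing fun i => ?_)
  by_contra hi
  exact h ⟨i, Finset.mem_filter.2 ⟨Finset.mem_univ i, hi⟩⟩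

lemma defects_adjacentPairing : defects (adjacentPairing k) = ∅ :=
  Finset.filter_false_of_mem fun i _ hi => hi (Finset.mem_image_of_mem _ (Finset.mem_univ i))

def swapBlock (i : Fin k) : Equiv.Perm (Fin (2*k)) := Equiv.swap (blockLeft i) (blockRight i)

lemma swapBlock_smul_blockPair (i j : Fin k) : swapBlock i • blockPair j = blockPair j := by
  by_cases hij : i = j
  · subst hij
    simp [swapBlock, blockPair, Finset.smul_finset_insert, Finset.pair_comm]
  · have hfix : ∀ v ∈ blockPair j, swapBlock i • v = v := by
      intro v hv
      rw [mem_blockPair] at hv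
      have := Fin.val_ne_of_ne hij
      exact Equiv.swap_apply_of_ne_of_ne (by simp [blockLeft, Fin.ext_iff]; omega)
        (by simp [blockRight, Fin.ext_iff]; omega)
    rw [Finset.smul_finset_def, Finset.image_congr hfix, Finset.image_id']

lemma defects_swapBlock_smul (i : Fin k) (M : Finset (Finset (Fin (2*k)))) :
    defects (swapBlock i • M) = defects M := by
  ext j
  have := Finset.smul_mem_smul_finset_iff (s := M) (b := blockPair j) (swapBlock i)
  rw [swapBlock_smul_blockPair] at this
  simp only [defects, Finset.mem_filter, this]

end Adjacent

section Involution
variable {k : ℕ} {M : Finset (Finset (Fin (2*k)))}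

noncomputable def swapFirstDefect (M : Finset (Finset (Fin (2*k)))) :
    Finset (Finset (Fin (2*k))) :=
  if h : (defects M).Nonempty then swapBlock ((defects M).min' h) • M else M

lemma swapFirstDefect_of_nonempty (h : (defects M).Nonempty) :
    swapFirstDefect M = swapBlock ((defects M).min' h) • M :=
  dif_pos h

lemma defects_swapFirstDefect (M : Finset (Finset (Fin (2*k)))) :
    defects (swapFirstDefect M) = defects M := by
  unfold swapFirstDefect
  split_ifs
  · exact defects_swapBlock_smul _ _
  · rfl

lemma swapFirstDefect_swapFirstDefect (M : Finset (Finset (Fin (2*k)))) :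
    swapFirstDefect (swapFirstDefect M) = M := by
  by_cases h : (defects M).Nonempty
  · rw [swapFirstDefect_of_nonempty h, swapFirstDefect]
    simp only [defects_swapBlock_smul, dif_pos h]
    exact Equiv.swap_smul_self_smul _ _ M
  · have hM : swapFirstDefect M = M := dif_neg h
    rw [hM, hM]

lemma isPairing_swapFirstDefect (hM : IsPairing k M) : IsPairing k (swapFirstDefect M) := by
  unfold swapFirstDefect
  split_ifs
  · exact hM.smul _
  · exact hM

lemma swapFirstDefect_ne_adjacentPairing (h : (defects M).Nonempty) :
    swapFirstDefect M ≠ adjacentPairing k := by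
  intro he
  rw [← defects_swapFirstDefect, he, defects_adjacentPairing] at h
  exact Finset.not_nonempty_empty h

lemma IsPairing.odd_crossNum_add_crossNum_swapFirstDefect (hM : IsPairing k M)
    (h : (defects M).Nonempty) : Odd (crossNum M + crossNum (swapFirstDefect M)) := by
  have hmem := (Finset.mem_filter.1 ((defects M).min'_mem h)).2
  rw [swapFirstDefect_of_nonempty h]
  exact hM.odd_crossNum_add_crossNum_swap_smul rfl hmem

end Involution

theorem even_pairings_exceed_odd_by_one_general (k : ℕ) :
    ((Finset.univ : Finset (Finset (Finset (Fin (2*k))))).filter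
        (fun M => IsPairing k M ∧ Even (crossNum M))).card
      = ((Finset.univ : Finset (Finset (Finset (Fin (2*k))))).filter
        (fun M => IsPairing k M ∧ Odd (crossNum M))).card + 1 := by
  have hadj : adjacentPairing k ∈ (Finset.univ : Finset (Finset (Finset (Fin (2*k))))).filter
      (fun M => IsPairing k M ∧ Even (crossNum M)) := by
    simp [isPairing_adjacentPairing, crossNum_adjacentPairing]
  rw [← Finset.card_erase_add_one hadj]
  congr 1
  refine Finset.card_nbij' swapFirstDefect swapFirstDefect ?_ ?_
    (fun M _ => swapFirstDefect_swapFirstDefect M) (fun M _ => swapFirstDefect_swapFirstDefect M)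
  all_goals
    intro M hM
    simp only [Finset.mem_coe, Finset.mem_erase, Finset.mem_filter, Finset.mem_univ,
      true_and] at hM ⊢
  · obtain ⟨hne, hM, heven⟩ := hM
    have hodd := hM.odd_crossNum_add_crossNum_swapFirstDefect (hM.defects_nonempty hne)
    exact ⟨isPairing_swapFirstDefect hM, (Nat.odd_add'.1 hodd).2 heven⟩
  · obtain ⟨hM, hodd⟩ := hM
    have hne : M ≠ adjacentPairing k := by
      rintro rfl
      simp [crossNum_adjacentPairing] at hodd
    have hD := hM.defects_nonempty hne
    exact ⟨swapFirstDefect_ne_adjacentPairing hD, isPairing_swapFirstDefect hM,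
      (Nat.odd_add.1 (hM.odd_crossNum_add_crossNum_swapFirstDefect hD)).1 hodd⟩

theorem even_pairings_exceed_odd_by_one (k : ℕ) (hk : 1 ≤ k) :
    ((Finset.univ : Finset (Finset (Finset (Fin (2*k))))).filter
        (fun M => IsPairing k M ∧ Even (crossNum M))).card
      = ((Finset.univ : Finset (Finset (Finset (Fin (2*k))))).filter
        (fun M => IsPairing k M ∧ Odd (crossNum M))).card + 1 :=
  even_pairings_exceed_odd_by_one_general k
end

section
/- Let N+_k and N-_k denote the number of pairings of {1,...,2k} with an even, respectively odd, number of crossings. Then the recursions N+_k = k·N+_{k-1} + (k-1)·N-_{k-1} and N-_k = k·N-_{k-1} + (k-1)·N+_{k-1} hold for all k ≥ 2. -/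
open scoped Classical

/-- Number of pairings of `{1,…,2k}` with an even number of crossings. -/
noncomputable def Nplus (k : ℕ) : ℕ :=
  ((Finset.univ : Finset (Finset (Finset (Fin (2*k))))).filter
    (fun M => IsPairing k M ∧ Even (crossNum M))).card

/-- Number of pairings of `{1,…,2k}` with an odd number of crossings. -/
noncomputable def Nminus (k : ℕ) : ℕ :=
  ((Finset.univ : Finset (Finset (Finset (Fin (2*k))))).filter
    (fun M => IsPairing k M ∧ Odd (crossNum M))).card

/-!
Number the points `0, …, 2k-1` and delete the last one together with its partner
`a ∈ {0, …, 2k-2}`. The remaining arcs, relabelled order-preservingly, form an arbitrary pairing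
`M'` of `2k-2` points and cross each other as before, while the arc `{a, 2k-1}` crosses exactly the arcs of `M'` with one endpoint below `a`.
The `a` points below `a` are covered by the arcs of `M'`, so the number of those arcs has the
parity of `a`. Hence deleting the arc changes the parity of the crossing number iff `a` is odd,
and `k` of the `2k-1` choices of `a` are even.
-/

open Finset

section Pairs

variable {α : Type*} [LinearOrder α]

theorem Finset.exists_lt_and_eq_pair_of_card_eq_two {s : Finset α} (h : #s = 2) :
    ∃ x y, x < y ∧ s = {x, y} := by
  obtain ⟨x, y, hxy, rfl⟩ := card_eq_two.mp h
  rcases hxy.lt_or_gt with hlt | hgt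
  · exact ⟨x, y, hlt, rfl⟩
  · exact ⟨y, x, hgt, pair_comm x y⟩

theorem Finset.eq_and_eq_of_pair_eq_pair {x y x' y' : α} (hxy : x < y) (hxy' : x' < y')
    (h : ({x, y} : Finset α) = {x', y'}) : x = x' ∧ y = y' := by
  have hx : x ∈ ({x', y'} : Finset α) := h ▸ mem_insert_self x {y}
  have hy : y ∈ ({x', y'} : Finset α) := h ▸ mem_insert_of_mem (mem_singleton_self y)
  rw [mem_insert, mem_singleton] at hx hy
  constructor <;> rcases hx with rfl | rfl <;> rcases hy with rfl | rfl <;> order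

end Pairs

section ExistsUnique

variable {α β : Type*} [DecidableEq β] {s : Finset α} {P : β → Prop}

theorem Finset.existsUnique_mem_image_iff {f : α → β} (hf : Function.Injective f) :
    (∃! b, b ∈ s.image f ∧ P b) ↔ ∃! a, a ∈ s ∧ P (f a) := by
  constructor
  · rintro ⟨b, ⟨hb, hPb⟩, huniq⟩
    obtain ⟨a, ha, rfl⟩ := mem_image.mp hb
    exact ⟨a, ⟨ha, hPb⟩, fun a' h ↦ hf (huniq _ ⟨mem_image_of_mem f h.1, h.2⟩)⟩
  · rintro ⟨a, ⟨ha, hPa⟩, huniq⟩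
    refine ⟨f a, ⟨mem_image_of_mem f ha, hPa⟩, fun b ⟨hb, hPb⟩ ↦ ?_⟩
    obtain ⟨a', ha', rfl⟩ := mem_image.mp hb
    rw [huniq a' ⟨ha', hPb⟩]

theorem Finset.existsUnique_mem_insert_iff {s : Finset β} {b : β} (hb : ¬ P b) :
    (∃! c, c ∈ insert b s ∧ P c) ↔ ∃! c, c ∈ s ∧ P c := by
  refine existsUnique_congr fun c ↦ ?_
  by_cases hc : c = b
  · subst hc
    simp [hb]
  · simp [hc]

end ExistsUnique

theorem Fin.card_filter_castSucc_lt {m : ℕ} (a : Fin (m+1)) :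
    #(univ.filter fun x : Fin m ↦ x.castSucc < a) = a := by
  simp only [Fin.lt_def, Fin.val_castSucc]
  rw [Fin.card_filter_val_lt, min_eq_right a.is_le]

theorem Finset.natCast_card_filter_eq_one {ι : Type*} (s : Finset ι) (f : ι → ℕ)
    (hf : ∀ i ∈ s, f i ≤ 2) :
    (#(s.filter (f · = 1)) : ZMod 2) = ∑ i ∈ s, (f i : ZMod 2) := by
  rw [card_filter, Nat.cast_sum]
  refine sum_congr rfl fun i hi ↦ ?_
  have hfi := hf i hi
  interval_cases f i <;> rfl

theorem Finset.sum_range_two_mul_add_one_natCast_zmod_two {β : Type*} [AddCommMonoid β]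
    (g : ZMod 2 → β) (m : ℕ) :
    ∑ i ∈ range (2*m+1), g i = (m+1) • g 0 + m • g 1 := by
  induction m with
  | zero => simp
  | succ m ih =>
    rw [show 2*(m+1)+1 = 2*m+1+1+1 by ring, sum_range_succ, sum_range_succ, ih,
      ZMod.natCast_eq_one_iff_odd.mpr ⟨m, rfl⟩,
      ZMod.natCast_eq_zero_iff_even.mpr ⟨m+1, by ring⟩]
    simp only [add_nsmul, one_nsmul]
    abel

theorem crossOrd_pair_iff_s1 {k : ℕ} {x y x' y' : Fin (2*k)} (hxy : x < y) (hxy' : x' < y') :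
    CrossOrd {x, y} {x', y'} ↔ x < x' ∧ x' < y ∧ y < y' := by
  constructor
  · rintro ⟨a, b, c, d, hab, hcd, hp, hq, hac, hcb, hbd⟩
    obtain ⟨rfl, rfl⟩ := eq_and_eq_of_pair_eq_pair hxy hab hp
    obtain ⟨rfl, rfl⟩ := eq_and_eq_of_pair_eq_pair hxy' hcd hq
    exact ⟨hac, hcb, hbd⟩
  · rintro ⟨h₁, h₂, h₃⟩
    exact ⟨x, y, x', y', hxy, hxy', rfl, rfl, h₁, h₂, h₃⟩

theorem crossOrd_image_iff {m k : ℕ} {f : Fin (2*m) → Fin (2*k)} (hf : StrictMono f)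
    {p q : Finset (Fin (2*m))} (hp : #p = 2) (hq : #q = 2) :
    CrossOrd (p.image f) (q.image f) ↔ CrossOrd p q := by
  obtain ⟨x, y, hxy, rfl⟩ := exists_lt_and_eq_pair_of_card_eq_two hp
  obtain ⟨x', y', hxy', rfl⟩ := exists_lt_and_eq_pair_of_card_eq_two hq
  simp only [image_insert, image_singleton]
  rw [crossOrd_pair_iff_s1 (hf hxy) (hf hxy'), crossOrd_pair_iff_s1 hxy hxy', hf.lt_iff_lt,
    hf.lt_iff_lt, hf.lt_iff_lt]

theorem crossNum_eq_sum {k : ℕ} (M : Finset (Finset (Fin (2*k)))) :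
    crossNum M = ∑ p ∈ M, ∑ q ∈ M, if CrossOrd p q then 1 else 0 := by
  rw [crossNum, card_filter, sum_product]

theorem crossNum_image {m k : ℕ} {f : Fin (2*m) → Fin (2*k)} (hf : StrictMono f)
    {M : Finset (Finset (Fin (2*m)))} (hM : ∀ p ∈ M, #p = 2) :
    crossNum (M.image (image f)) = crossNum M := by
  have hinj : Set.InjOn (image f) M := (image_injective hf.injective).injOn
  rw [crossNum_eq_sum, crossNum_eq_sum, sum_image hinj]
  refine sum_congr rfl fun p hp ↦ ?_
  rw [sum_image hinj]
  exact sum_congr rfl fun q hq ↦ by rw [crossOrd_image_iff hf (hM p hp) (hM q hq)]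

theorem crossNum_insert {k : ℕ} {P : Finset (Fin (2*k))} {S : Finset (Finset (Fin (2*k)))}
    (hPS : P ∉ S) (hP : ∀ q, ¬ CrossOrd P q) :
    crossNum (insert P S) = crossNum S + #(S.filter (CrossOrd · P)) := by
  rw [crossNum_eq_sum, crossNum_eq_sum, sum_insert hPS, card_filter]
  simp only [hP, if_false, sum_const_zero, zero_add]
  rw [← sum_add_distrib]
  exact sum_congr rfl fun p _ ↦ by rw [sum_insert hPS, add_comm]

namespace IsPairing

variable {k : ℕ} {M : Finset (Finset (Fin (2*k)))}

theorem eq_of_mem_of_mem (hM : IsPairing k M) {p q : Finset (Fin (2*k))} {v : Fin (2*k)}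
    (hp : p ∈ M) (hq : q ∈ M) (hvp : v ∈ p) (hvq : v ∈ q) : p = q :=
  (hM.2 v).unique ⟨hp, hvp⟩ ⟨hq, hvq⟩

theorem sum_card_filter (hM : IsPairing k M) (P : Fin (2*k) → Prop) [DecidablePred P] :
    ∑ p ∈ M, #(p.filter P) = #(univ.filter P) := by
  rw [← card_biUnion]
  · congr 1
    ext v
    simp only [mem_biUnion, mem_filter, mem_univ, true_and]
    constructor
    · rintro ⟨p, -, -, hv⟩
      exact hv
    · intro hv
      obtain ⟨p, ⟨hp, hvp⟩, -⟩ := hM.2 v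
      exact ⟨p, hp, hvp, hv⟩
  · intro p hp q hq hpq
    refine disjoint_filter_filter (disjoint_left.mpr fun v hvp hvq ↦ hpq ?_)
    exact hM.eq_of_mem_of_mem hp hq hvp hvq

end IsPairing

section InsertLastArc

variable {n : ℕ}

def lastArc (a : Fin (2*n+1)) : Finset (Fin (2*(n+1))) := {a.castSucc, Fin.last (2*n+1)}

def skipLastArc (a : Fin (2*n+1)) : Fin (2*n) ↪o Fin (2*(n+1)) :=
  a.succAboveOrderEmb.trans Fin.castSuccOrderEmb

theorem skipLastArc_apply (a : Fin (2*n+1)) (x : Fin (2*n)) :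
    skipLastArc a x = (a.succAbove x).castSucc :=
  rfl

def insertLastArc (a : Fin (2*n+1)) (M : Finset (Finset (Fin (2*n)))) :
    Finset (Finset (Fin (2*(n+1)))) :=
  insert (lastArc a) (M.image (image (skipLastArc a)))

theorem range_skipLastArc (a : Fin (2*n+1)) :
    Set.range (skipLastArc a) = (lastArc a : Set (Fin (2*(n+1))))ᶜ := by
  ext v
  induction v using Fin.lastCases with
  | last => simp [lastArc, skipLastArc_apply, Fin.castSucc_ne_last]
  | cast b =>
    induction b using a.succAboveCases with
    | x => simp [lastArc, skipLastArc_apply, Fin.succAbove_ne]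
    | p x => simp [lastArc, skipLastArc_apply, Fin.succAbove_ne, Fin.castSucc_ne_last]

theorem skipLastArc_not_mem_lastArc (a : Fin (2*n+1)) (x : Fin (2*n)) :
    skipLastArc a x ∉ lastArc a := by
  simpa [range_skipLastArc] using Set.mem_range_self (f := skipLastArc a) x

theorem not_mem_image_skipLastArc {a : Fin (2*n+1)} {v : Fin (2*(n+1))} (hv : v ∈ lastArc a)
    (p : Finset (Fin (2*n))) : v ∉ p.image (skipLastArc a) := by
  intro h
  obtain ⟨x, -, rfl⟩ := mem_image.mp h
  exact skipLastArc_not_mem_lastArc a x hv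

theorem lastArc_not_mem_image (c a : Fin (2*n+1)) (M : Finset (Finset (Fin (2*n)))) :
    lastArc c ∉ M.image (image (skipLastArc a)) := by
  intro h
  obtain ⟨p, -, hp⟩ := mem_image.mp h
  have hlast : Fin.last _ ∈ p.image (skipLastArc a) := hp ▸ by simp [lastArc]
  exact not_mem_image_skipLastArc (by simp [lastArc]) p hlast

theorem lastArc_mem_insertLastArc_iff {a c : Fin (2*n+1)} {M : Finset (Finset (Fin (2*n)))} :
    lastArc c ∈ insertLastArc a M ↔ c = a := by
  refine ⟨fun h ↦ ?_, fun h ↦ h ▸ mem_insert_self _ _⟩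
  rcases mem_insert.mp h with h | h
  · have : c.castSucc ∈ lastArc a := h ▸ mem_insert_self _ _
    simpa [lastArc, Fin.castSucc_ne_last] using this
  · exact absurd h (lastArc_not_mem_image c a M)

theorem insertLastArc_injective (a : Fin (2*n+1)) : Function.Injective (insertLastArc a) := by
  intro M₁ M₂ h
  have himage := congrArg (erase · (lastArc a)) h
  simp only [insertLastArc, erase_insert (lastArc_not_mem_image a a _)] at himage
  exact image_injective (image_injective (skipLastArc a).injective) himage

theorem isPairing_insertLastArc_iff {a : Fin (2*n+1)} {M : Finset (Finset (Fin (2*n)))} :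
    IsPairing (n+1) (insertLastArc a M) ↔ IsPairing n M := by
  have hcard : (∀ p ∈ insertLastArc a M, #p = 2) ↔ ∀ p ∈ M, #p = 2 := by
    simp [insertLastArc, lastArc, card_image_of_injective _ (skipLastArc a).injective,
      Fin.castSucc_ne_last]
  have hcover_lastArc : ∀ v ∈ lastArc a, ∃! q, q ∈ insertLastArc a M ∧ v ∈ q := by
    refine fun v hv ↦ ⟨lastArc a, ⟨mem_insert_self _ _, hv⟩, fun q ⟨hq, hvq⟩ ↦ ?_⟩
    refine (mem_insert.mp hq).resolve_right fun hqM ↦ ?_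
    obtain ⟨p, -, rfl⟩ := mem_image.mp hqM
    exact not_mem_image_skipLastArc hv p hvq
  have hcover_skip : ∀ x, (∃! q, q ∈ insertLastArc a M ∧ skipLastArc a x ∈ q) ↔
      ∃! p, p ∈ M ∧ x ∈ p := by
    intro x
    rw [insertLastArc,
      existsUnique_mem_insert_iff (P := (skipLastArc a x ∈ ·)) (skipLastArc_not_mem_lastArc a x),
      existsUnique_mem_image_iff (image_injective (skipLastArc a).injective)]
    simp only [(skipLastArc a).injective.mem_finset_image]
  refine and_congr hcard ⟨fun h x ↦ (hcover_skip x).mp (h _), fun h v ↦ ?_⟩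
  by_cases hv : v ∈ lastArc a
  · exact hcover_lastArc v hv
  · obtain ⟨x, rfl⟩ : v ∈ Set.range (skipLastArc a) := by simpa [range_skipLastArc] using hv
    exact (hcover_skip x).mpr (h x)

theorem IsPairing.exists_lastArc_mem {M : Finset (Finset (Fin (2*(n+1))))}
    (hM : IsPairing (n+1) M) : ∃ a, lastArc a ∈ M := by
  obtain ⟨p, ⟨hp, hlast⟩, -⟩ := hM.2 (Fin.last _)
  obtain ⟨x, y, hxy, rfl⟩ := card_eq_two.mp (hM.1 p hp)
  obtain ⟨w, hw, hwM⟩ : ∃ w, w ≠ Fin.last _ ∧ {w, Fin.last _} ∈ M := by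
    rcases (by simpa using hlast : Fin.last _ = x ∨ Fin.last _ = y) with rfl | rfl
    · exact ⟨y, hxy.symm, pair_comm _ y ▸ hp⟩
    · exact ⟨x, hxy, hp⟩
  obtain ⟨a, rfl⟩ := Fin.exists_castSucc_eq.mpr hw
  exact ⟨a, hwM⟩

theorem IsPairing.exists_insertLastArc_eq {a : Fin (2*n+1)} {M : Finset (Finset (Fin (2*(n+1))))}
    (hM : IsPairing (n+1) M) (ha : lastArc a ∈ M) : ∃ M', insertLastArc a M' = M := by
  refine ⟨univ.filter (fun p ↦ p.image (skipLastArc a) ∈ M), ?_⟩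
  ext q
  simp only [insertLastArc, mem_insert, mem_image, mem_filter, mem_univ, true_and]
  constructor
  · rintro (rfl | ⟨p, hp, rfl⟩)
    exacts [ha, hp]
  · intro hq
    by_cases hqa : q = lastArc a
    · exact Or.inl hqa
    · have hsub : q ⊆ univ.image (skipLastArc a) := fun v hv ↦ by
        have hva : v ∉ lastArc a := fun hva ↦ hqa (hM.eq_of_mem_of_mem hq ha hv hva)
        simpa [← Set.mem_range, range_skipLastArc] using hva
      obtain ⟨p, -, rfl⟩ := subset_image_iff.mp hsub
      exact Or.inr ⟨p, hq, rfl⟩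

end InsertLastArc

section CrossingsWithLastArc

variable {n : ℕ}

theorem not_crossOrd_lastArc (a : Fin (2*n+1)) (q : Finset (Fin (2*(n+1)))) :
    ¬ CrossOrd (lastArc a) q := by
  rintro ⟨x, y, c, d, hxy, -, hp, -, -, -, hyd⟩
  obtain ⟨-, rfl⟩ := eq_and_eq_of_pair_eq_pair (Fin.castSucc_lt_last a) hxy hp
  exact (Fin.le_last d).not_gt hyd

theorem crossOrd_image_skipLastArc_lastArc_iff {a : Fin (2*n+1)} {p : Finset (Fin (2*n))}
    (hp : #p = 2) :
    CrossOrd (p.image (skipLastArc a)) (lastArc a) ↔ #(p.filter (·.castSucc < a)) = 1 := by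
  obtain ⟨x, y, hxy, rfl⟩ := exists_lt_and_eq_pair_of_card_eq_two hp
  simp only [image_insert, image_singleton, lastArc]
  rw [crossOrd_pair_iff_s1 ((skipLastArc a).strictMono hxy) (Fin.castSucc_lt_last a)]
  simp only [skipLastArc_apply, Fin.castSucc_lt_castSucc_iff, Fin.succAbove_lt_iff_castSucc_lt,
    Fin.lt_succAbove_iff_le_castSucc, Fin.castSucc_lt_last, and_true]
  rw [filter_insert, filter_singleton, ← not_lt]
  by_cases hy : y.castSucc < a
  · simp [(Fin.castSucc_lt_castSucc_iff.mpr hxy).trans hy, hy, card_pair hxy.ne]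
  · by_cases hx : x.castSucc < a <;> simp [hx, hy]

theorem crossNum_insertLastArc (a : Fin (2*n+1)) {M : Finset (Finset (Fin (2*n)))}
    (hM : ∀ p ∈ M, #p = 2) :
    crossNum (insertLastArc a M) =
      crossNum M + #(M.filter fun p ↦ CrossOrd (p.image (skipLastArc a)) (lastArc a)) := by
  rw [insertLastArc, crossNum_insert (lastArc_not_mem_image a a M) (not_crossOrd_lastArc a),
    crossNum_image (skipLastArc a).strictMono hM, filter_image,
    card_image_of_injective _ (image_injective (skipLastArc a).injective)]

theorem IsPairing.natCast_crossNum_insertLastArc (a : Fin (2*n+1))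
    {M : Finset (Finset (Fin (2*n)))} (hM : IsPairing n M) :
    (crossNum (insertLastArc a M) : ZMod 2) = crossNum M + (a : ℕ) := by
  have hstraddle := filter_congr fun p hp ↦
    crossOrd_image_skipLastArc_lastArc_iff (a := a) (hM.1 p hp)
  rw [crossNum_insertLastArc a hM.1, hstraddle, Nat.cast_add,
    natCast_card_filter_eq_one _ _ fun p hp ↦ (card_filter_le p _).trans (hM.1 p hp).le,
    ← Nat.cast_sum, hM.sum_card_filter, Fin.card_filter_castSucc_lt]

end CrossingsWithLastArc

noncomputable def pairingsOfParity (k : ℕ) (r : ZMod 2) : Finset (Finset (Finset (Fin (2*k)))) :=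
  univ.filter fun M ↦ IsPairing k M ∧ (crossNum M : ZMod 2) = r

theorem Nplus_eq_card_pairingsOfParity (k : ℕ) : Nplus k = #(pairingsOfParity k 0) := by
  simp only [Nplus, pairingsOfParity, ZMod.natCast_eq_zero_iff_even]

theorem Nminus_eq_card_pairingsOfParity (k : ℕ) : Nminus k = #(pairingsOfParity k 1) := by
  simp only [Nminus, pairingsOfParity, ZMod.natCast_eq_one_iff_odd]

section Recursion

variable {n : ℕ}

theorem pairingsOfParity_succ (r : ZMod 2) :
    pairingsOfParity (n+1) r = univ.biUnion fun a : Fin (2*n+1) ↦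
      (pairingsOfParity n (r + (a : ℕ))).image (insertLastArc a) := by
  ext M
  simp only [pairingsOfParity, mem_biUnion, mem_image, mem_filter, mem_univ, true_and]
  constructor
  · rintro ⟨hM, hr⟩
    obtain ⟨a, ha⟩ := hM.exists_lastArc_mem
    obtain ⟨M', rfl⟩ := hM.exists_insertLastArc_eq ha
    rw [isPairing_insertLastArc_iff] at hM
    refine ⟨a, M', ⟨hM, ?_⟩, rfl⟩
    rw [← hr, hM.natCast_crossNum_insertLastArc, add_assoc, CharTwo.add_self_eq_zero, add_zero]
  · rintro ⟨a, M', ⟨hM', hr⟩, rfl⟩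
    refine ⟨isPairing_insertLastArc_iff.mpr hM', ?_⟩
    rw [hM'.natCast_crossNum_insertLastArc, hr, add_assoc, CharTwo.add_self_eq_zero, add_zero]

theorem card_pairingsOfParity_succ (r : ZMod 2) :
    #(pairingsOfParity (n+1) r) =
      (n+1) * #(pairingsOfParity n r) + n * #(pairingsOfParity n (r + 1)) := by
  have hdisj : Set.PairwiseDisjoint (↑(univ : Finset (Fin (2*n+1))))
      fun a : Fin (2*n+1) ↦ (pairingsOfParity n (r + (a : ℕ))).image (insertLastArc a) := by
    intro a _ b _ hab
    refine disjoint_left.mpr fun M hMa hMb ↦ hab ?_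
    obtain ⟨Ma, -, rfl⟩ := mem_image.mp hMa
    obtain ⟨Mb, -, hMb⟩ := mem_image.mp hMb
    have : lastArc a ∈ insertLastArc b Mb := hMb ▸ mem_insert_self _ _
    exact lastArc_mem_insertLastArc_iff.mp this
  rw [pairingsOfParity_succ, card_biUnion hdisj]
  simp only [card_image_of_injective _ (insertLastArc_injective _)]
  rw [Fin.sum_univ_eq_sum_range (fun i ↦ #(pairingsOfParity n (r + i))),
    sum_range_two_mul_add_one_natCast_zmod_two (fun z ↦ #(pairingsOfParity n (r + z))),
    add_zero, smul_eq_mul, smul_eq_mul]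

end Recursion

theorem pairing_crossing_recursion (k : ℕ) (hk : 2 ≤ k) :
    Nplus k = k * Nplus (k-1) + (k-1) * Nminus (k-1) ∧
    Nminus k = k * Nminus (k-1) + (k-1) * Nplus (k-1) := by
  obtain ⟨n, rfl⟩ : ∃ n, k = n + 1 := ⟨k - 1, by omega⟩
  simp only [Nat.add_sub_cancel, Nplus_eq_card_pairingsOfParity,
    Nminus_eq_card_pairingsOfParity]
  refine ⟨by simpa using card_pairingsOfParity_succ (n := n) 0, ?_⟩
  simpa [show (1 + 1 : ZMod 2) = 0 from rfl] using card_pairingsOfParity_succ (n := n) 1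
end

section
/- Let M, N ≥ 1 and for 0 ≤ p < M, 0 ≤ q < N set ω_p = 2πp/M, ω_q = 2πq/N. For x real with |x| < √2 − 1, define the 4×4 matrix B(p,q) whose rows are indexed by directions with entries B = [[e^{iω_p}, e^{iω_p+iπ/4}, 0, e^{iω_p−iπ/4}], [e^{iω_q−iπ/4}, e^{iω_q}, e^{iω_q+iπ/4}, 0], [0, e^{−iω_p−iπ/4}, e^{−iω_p}, e^{−iω_p+iπ/4}], [e^{−iω_q+iπ/4}, 0, e^{−iω_q−iπ/4}, e^{−iω_q}]]. Then det(I − x·B(p,q)) = (1+x²)² − 2x(1−x²)(cos ω_p + cos ω_q). -/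
/-!
Write `a = e^{iω_p}`, `b = e^{iω_q}` and `u = e^{iπ/4}`, so that every entry of `B(p,q)` is a
monomial in `a^{±1}`, `b^{±1}`, `u^{±1}`. In the expansion of `det(1 - x B)` the phase `u` survives
only in the two permutations running around the 4-cycle, which contribute `-x⁴ (u⁴ + u⁻⁴)`.
Since `u⁴ = e^{iπ} = -1` this turns `1 + 2x² - x⁴` into `(1 + x²)²`, and the remaining terms are
`-x (1 - x²) (a + a⁻¹ + b + b⁻¹)` with `a + a⁻¹ = 2 cos ω_p`, `b + b⁻¹ = 2 cos ω_q`.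
-/

open Complex

/-- The Fourier block of the Kac–Ward transition matrix on the torus, for
frequencies `ω_p`, `ω_q`. -/
noncomputable def fourierBlock (ωp ωq : ℝ) : Matrix (Fin 4) (Fin 4) ℂ :=
  !![Complex.exp (I * ωp), Complex.exp (I * (ωp + Real.pi/4)), 0,
       Complex.exp (I * (ωp - Real.pi/4));
     Complex.exp (I * (ωq - Real.pi/4)), Complex.exp (I * ωq),
       Complex.exp (I * (ωq + Real.pi/4)), 0;
     0, Complex.exp (I * (-ωp - Real.pi/4)), Complex.exp (I * (-ωp)),
       Complex.exp (I * (-ωp + Real.pi/4));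
     Complex.exp (I * (-ωq + Real.pi/4)), 0, Complex.exp (I * (-ωq - Real.pi/4)),
       Complex.exp (I * (-ωq))]

def kacWardBlock {K : Type*} [DivisionRing K] (a b u : K) : Matrix (Fin 4) (Fin 4) K :=
  !![a, a * u, 0, a * u⁻¹;
     b * u⁻¹, b, b * u, 0;
     0, a⁻¹ * u⁻¹, a⁻¹, a⁻¹ * u;
     b⁻¹ * u, 0, b⁻¹ * u⁻¹, b⁻¹]

theorem det_one_sub_smul_kacWardBlock {K : Type*} [Field K] {a b u : K} (ha : a ≠ 0)
    (hb : b ≠ 0) (hu : u ≠ 0) (x : K) :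
    (1 - x • kacWardBlock a b u).det =
      1 + 2 * x ^ 2 - x ^ 4 - x ^ 4 * (u ^ 4 + u⁻¹ ^ 4) - x * (1 - x ^ 2) * (a + a⁻¹ + (b + b⁻¹)) := by
  rw [Matrix.det_succ_row_zero, Fin.sum_univ_four]
  simp only [Matrix.det_fin_three, Matrix.submatrix_apply, Matrix.sub_apply, Matrix.one_apply,
    Matrix.smul_apply, smul_eq_mul, kacWardBlock, Matrix.of_apply, Matrix.cons_val, Fin.succAbove,
    Fin.reduceSucc, Fin.reduceCastSucc, Fin.reduceLT, Fin.reduceEq, if_true, if_false,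
    Fin.coe_ofNat_eq_mod]
  field_simp
  ring

theorem fourierBlock_eq_kacWardBlock (ωp ωq : ℝ) :
    fourierBlock ωp ωq = kacWardBlock (exp (ωp * I)) (exp (ωq * I)) (exp (Real.pi / 4 * I)) := by
  ext i j
  fin_cases i <;> fin_cases j <;>
    simp only [fourierBlock, kacWardBlock, Matrix.of_apply, Matrix.cons_val', Matrix.cons_val,
      Matrix.cons_val_fin_one, Fin.zero_eta, Fin.mk_one, Fin.reduceFinMk, ← exp_neg, ← exp_add] <;>
    ring_nf

theorem exp_pi_div_four_mul_I_pow_four : exp (Real.pi / 4 * I) ^ 4 = -1 := by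
  rw [← exp_nat_mul, ← exp_pi_mul_I]
  push_cast
  ring_nf

theorem exp_mul_I_add_inv (θ : ℝ) : exp (θ * I) + (exp (θ * I))⁻¹ = 2 * Real.cos θ := by
  rw [← exp_neg, ofReal_cos, two_cos, neg_mul]

theorem fourierBlock_det_general (M N : ℕ)
    (p q : ℕ) (x : ℝ) :
    (1 - (x : ℂ) • fourierBlock (2 * Real.pi * p / M) (2 * Real.pi * q / N)).det
      = (((1 + x ^ 2) ^ 2
          - 2 * x * (1 - x ^ 2) *
            (Real.cos (2 * Real.pi * p / M) + Real.cos (2 * Real.pi * q / N)) : ℝ) : ℂ) := by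
  rw [fourierBlock_eq_kacWardBlock,
    det_one_sub_smul_kacWardBlock (exp_ne_zero _) (exp_ne_zero _) (exp_ne_zero _), inv_pow,
    exp_pi_div_four_mul_I_pow_four, exp_mul_I_add_inv, exp_mul_I_add_inv]
  push_cast
  ring

/-- Determinant identity for the Fourier blocks:
`det(I − x·B(p,q)) = (1+x²)² − 2x(1−x²)(cos ω_p + cos ω_q)`. -/
theorem fourierBlock_det (M N : ℕ) (hM : 1 ≤ M) (hN : 1 ≤ N)
    (p q : ℕ) (hp : p < M) (hq : q < N) (x : ℝ)
    (hx : |x| < Real.sqrt 2 - 1) :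
    (1 - (x : ℂ) • fourierBlock (2 * Real.pi * p / M) (2 * Real.pi * q / N)).det
      = (((1 + x ^ 2) ^ 2
          - 2 * x * (1 - x ^ 2) *
            (Real.cos (2 * Real.pi * p / M) + Real.cos (2 * Real.pi * q / N)) : ℝ) : ℂ) :=
  fourierBlock_det_general M N p q x
end
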